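/- arXiv:2408.14267 — 2 statements merged into one kernel-verified Lean document; each statement's English description precedes it below -/
import Mathlib

section
/- Let ∇ ∈ ℝ^{N×D} be a fixed matrix and, for each row i, let R_i = max_j ∇_{ij} − min_j ∇_{ij} > 0 and Z_i = min_j ∇_{ij}. For B = 2^b − 1, define the per-sample quantizer Q(∇)_{ij} = SR(B(∇_{ij} − Z_i)/R_i) · (R_i/B) + Z_i, with independent stochastic roundings across entries. Then Q is unbiased (E[Q(∇)_{ij}] = ∇_{ij} for all i, j) and the total conditional variance satisfies Var[Q(∇) | ∇] = Σ_{i,j} Var[Q(∇)_{ij} | ∇] ≤ (D/(4B²)) · Σ_{i=1}^N R_i². -/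
open MeasureTheory ProbabilityTheory Finset
open scoped Classical

lemma ceil_sub_floor_mul_fract (x : ℝ) :
    ((⌈x⌉ : ℝ) - (⌊x⌋ : ℝ)) * Int.fract x = Int.fract x := by
  rcases eq_or_ne (Int.fract x) 0 with h | h
  · simp [h]
  · have : (⌈x⌉ : ℝ) = (⌊x⌋ : ℝ) + 1 := by
      have := (or_iff_right h).mp (Int.fract_eq_zero_or_add_one_sub_ceil x)
      have hfl : Int.fract x = x - ⌊x⌋ := Int.self_sub_floor x ▸ rfl
      rw [hfl] at this; linarith
    rw [this]; ring

lemma bernoulli_mean_var {Ω : Type*} [MeasurableSpace Ω] (μ : Measure Ω)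
    [IsProbabilityMeasure μ] (A : Set Ω) (hA : MeasurableSet A)
    (p : ℝ) (hp0 : 0 ≤ p) (hpA : μ A = ENNReal.ofReal p)
    (s c : ℝ) (X : Ω → ℝ)
    (hX : ∀ ω, X ω = A.indicator (fun _ => s) ω + c) :
    ∫ ω, X ω ∂μ = s * p + c ∧ variance X μ = s ^ 2 * (p * (1 - p)) := by
  have hint : Integrable (A.indicator (fun _ => s)) μ :=
    (integrable_const s).indicator hA
  have htoReal : (μ A).toReal = p := by rw [hpA, ENNReal.toReal_ofReal hp0]
  have hXfun : X = fun ω => A.indicator (fun _ => s) ω + c := funext hX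
  have hmean : ∫ ω, X ω ∂μ = s * p + c := by
    rw [hXfun, integral_add hint (integrable_const c), integral_indicator_const _ hA,
      integral_const, measureReal_def, measureReal_def, htoReal]
    simp [mul_comm]
  refine ⟨hmean, ?_⟩
  have hmem : MemLp X 2 μ := by
    rw [hXfun]
    exact ((memLp_const s).indicator hA).add (memLp_const c)
  rw [variance_eq_integral hmem.aestronglyMeasurable.aemeasurable, hmean]
  change ∫ ω, (((X - fun _ => s * p + c) ^ (2 : ℕ) : Ω → ℝ)) ω ∂μ = _
  have heq : ((X - fun _ => s * p + c) ^ (2 : ℕ)) =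
      fun ω => A.indicator (fun _ => s ^ 2 * ((1 - p) ^ 2 - p ^ 2)) ω + s ^ 2 * p ^ 2 := by
    funext ω
    simp only [Pi.pow_apply, Pi.sub_apply, hX ω]
    by_cases h : ω ∈ A <;> simp [Set.indicator_of_mem, Set.indicator_of_notMem, h] <;> ring
  rw [heq, integral_add ((integrable_const _).indicator hA) (integrable_const _),
    integral_indicator_const _ hA, integral_const, measureReal_def, measureReal_def, htoReal]
  simp only [smul_eq_mul, measure_univ, ENNReal.toReal_one, one_smul]
  ring

/-- Unbiasedness and variance of the per-sample quantizer (PSQ): each row `i` of the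
`N × D` matrix `∇` is quantized with its own range `R i = max_j ∇_{ij} - min_j ∇_{ij} > 0`
and zero point `Z i = min_j ∇_{ij}`, via independent stochastic roundings
`Q(∇)_{ij} = SR(B(∇_{ij}-Z_i)/R_i) · (R_i/B) + Z_i` with `B = 2^b - 1` bins.  Then
`E[Q(∇)_{ij}] = ∇_{ij}` for all `i, j`, and
`∑_{i,j} Var[Q(∇)_{ij}] ≤ (D/(4B²)) ∑_{i=1}^N R_i²`. -/
theorem per_sample_quantizer_unbiased_and_variance
    {Ω : Type*} [MeasurableSpace Ω] (μ : Measure Ω) [IsProbabilityMeasure μ]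
    (N D b : ℕ) (hN : 0 < N) (hD : 0 < D) (hb : 1 ≤ b)
    (B : ℕ) (hB : B = 2 ^ b - 1)
    (grad : Fin N → Fin D → ℝ)
    (R Z : Fin N → ℝ)
    (hR : ∀ i, R i = (⨆ j, grad i j) - ⨅ j, grad i j)
    (hZ : ∀ i, Z i = ⨅ j, grad i j)
    (hRpos : ∀ i, 0 < R i)
    (A : Fin N → Fin D → Set Ω) (hAmeas : ∀ i j, MeasurableSet (A i j))
    (hpA : ∀ i j, μ (A i j) = ENNReal.ofReal
      ((B : ℝ) * (grad i j - Z i) / R i - ⌊(B : ℝ) * (grad i j - Z i) / R i⌋))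
    (Q : Fin N × Fin D → Ω → ℝ)
    (hQ : ∀ i j ω, Q (i, j) ω =
      (if ω ∈ A i j then (⌈(B : ℝ) * (grad i j - Z i) / R i⌉ : ℝ)
        else (⌊(B : ℝ) * (grad i j - Z i) / R i⌋ : ℝ)) * (R i / B) + Z i)
    (hindep : iIndepFun Q μ) :
    (∀ i j, ∫ ω, Q (i, j) ω ∂μ = grad i j) ∧
      ∑ i : Fin N, ∑ j : Fin D, variance (Q (i, j)) μ ≤
        ((D : ℝ) / (4 * (B : ℝ) ^ 2)) * ∑ i : Fin N, R i ^ 2 := by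
  have hB1 : 1 ≤ B := by
    rw [hB]
    have : 2 ≤ 2 ^ b := by
      calc 2 = 2 ^ 1 := rfl
      _ ≤ 2 ^ b := Nat.pow_le_pow_right (by norm_num) hb
    omega
  have hBpos : (0 : ℝ) < (B : ℝ) := by exact_mod_cast hB1
  have key : ∀ i j, (∫ ω, Q (i, j) ω ∂μ = grad i j) ∧
      variance (Q (i, j)) μ ≤ R i ^ 2 / (4 * (B : ℝ) ^ 2) := by
    intro i j
    set x : ℝ := (B : ℝ) * (grad i j - Z i) / R i with hx
    have hfr : Int.fract x = x - ⌊x⌋ := (Int.self_sub_floor x).symm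
    have hμA : μ (A i j) = ENNReal.ofReal (Int.fract x) := by
      rw [hpA i j, hfr]
    have hX : ∀ ω, Q (i, j) ω =
        (A i j).indicator (fun _ => ((⌈x⌉ : ℝ) - ⌊x⌋) * (R i / B)) ω
          + ((⌊x⌋ : ℝ) * (R i / B) + Z i) := by
      intro ω
      rw [hQ i j ω]
      by_cases h : ω ∈ A i j <;>
        simp [Set.indicator_of_mem, Set.indicator_of_notMem, h, ← hx] <;> ring
    obtain ⟨hm, hv⟩ := bernoulli_mean_var μ (A i j) (hAmeas i j) (Int.fract x)
      (Int.fract_nonneg x) hμA _ _ (Q (i, j)) hX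
    have hxval : x * (R i / B) = grad i j - Z i := by
      rw [hx]
      field_simp [(hRpos i).ne', hBpos.ne']
    have hfadd : Int.fract x + (⌊x⌋ : ℝ) = x := by rw [hfr]; ring
    constructor
    · rw [hm]
      linear_combination (R i / B) * ceil_sub_floor_mul_fract x
        + (R i / B) * hfadd + hxval
    · rw [hv]
      have hp0 := Int.fract_nonneg x
      have hp1 : Int.fract x ≤ 1 := (Int.fract_lt_one x).le
      have hcf0 : (0 : ℝ) ≤ (⌈x⌉ : ℝ) - ⌊x⌋ := by
        have := Int.floor_le_ceil x
        have : ((⌊x⌋ : ℤ) : ℝ) ≤ ((⌈x⌉ : ℤ) : ℝ) := by exact_mod_cast this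
        linarith
      have hcf1 : (⌈x⌉ : ℝ) - ⌊x⌋ ≤ 1 := by
        have := Int.ceil_le_floor_add_one x
        have : ((⌈x⌉ : ℤ) : ℝ) ≤ ((⌊x⌋ : ℤ) : ℝ) + 1 := by exact_mod_cast this
        linarith
      have hRB : (0 : ℝ) ≤ R i / B := div_nonneg (hRpos i).le hBpos.le
      have ha2 : ((⌈x⌉ : ℝ) - ⌊x⌋) ^ 2 ≤ 1 := by nlinarith
      have hs2 : (((⌈x⌉ : ℝ) - ⌊x⌋) * (R i / B)) ^ 2 ≤ (R i / B) ^ 2 := by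
        rw [mul_pow]
        calc ((⌈x⌉ : ℝ) - ⌊x⌋) ^ 2 * (R i / B) ^ 2 ≤ 1 * (R i / B) ^ 2 :=
              mul_le_mul_of_nonneg_right ha2 (sq_nonneg _)
          _ = (R i / B) ^ 2 := one_mul _
      have hq : Int.fract x * (1 - Int.fract x) ≤ 1 / 4 := by
        nlinarith [sq_nonneg (Int.fract x - 1 / 2)]
      have hq0 : 0 ≤ Int.fract x * (1 - Int.fract x) := by nlinarith
      have hfin : R i ^ 2 / (4 * (B : ℝ) ^ 2) = (R i / B) ^ 2 * (1 / 4) := by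
        rw [div_pow]
        field_simp [hBpos.ne']
      rw [hfin]
      exact mul_le_mul hs2 hq hq0 (sq_nonneg _)
  refine ⟨fun i j => (key i j).1, ?_⟩
  calc ∑ i : Fin N, ∑ j : Fin D, variance (Q (i, j)) μ
      ≤ ∑ i : Fin N, ∑ _j : Fin D, R i ^ 2 / (4 * (B : ℝ) ^ 2) := by
        refine Finset.sum_le_sum fun i _ => Finset.sum_le_sum fun j _ => (key i j).2
    _ = ((D : ℝ) / (4 * (B : ℝ) ^ 2)) * ∑ i : Fin N, R i ^ 2 := by
        simp only [Finset.sum_const, Finset.card_univ, Fintype.card_fin, nsmul_eq_mul]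
        rw [Finset.mul_sum]
        exact Finset.sum_congr rfl fun i _ => by ring
end

section
/- Let ∇ ∈ ℝ^{N×D} be a fixed matrix, let K ≤ N, and suppose only rows 1, …, K are retained (the remaining rows are set to zero and not quantized). Each retained row i is quantized by the b-bit per-sample quantizer with B = 2^b − 1 bins, range R_i = max_j ∇_{ij} − min_j ∇_{ij} > 0, and zero point Z_i = min_j ∇_{ij}: Q(∇)_{ij} = SR(B(∇_{ij} − Z_i)/R_i)·(R_i/B) + Z_i for i ≤ K, with independent stochastic roundings. Then the total conditional variance satisfies Var[Q(∇) | ∇] ≤ (D/(4B²)) · Σ_{i=1}^K R_i². In particular, with K = N/b retained rows, this bound (D/(4B²)) Σ_{i=1}^{N/b} R_i² is at most the 1-bit per-sample-quantizer variance bound (D/4)(Σ_{i=1}^{N/b} R_i² + Σ_{i=N/b+1}^N R_i²), since B = 2^b − 1 ≥ 1. -/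
open MeasureTheory ProbabilityTheory Finset
open scoped Classical

/-- Variance of the AGP (activation gradient pruning) quantizer: only the first `K` rows
of the `N × D` matrix `∇` are retained and quantized to `b` bits (`B = 2^b - 1` bins,
per-row range `R i > 0` and zero point `Z i`); the remaining rows are set to zero.  Then
the total conditional variance satisfies
`∑_{i,j} Var[Q(∇)_{ij}] ≤ (D/(4B²)) ∑_{i=1}^K R_i²`, and this bound is at most the 1-bit
per-sample-quantizer variance bound `(D/4)(∑_{i=1}^K R_i² + ∑_{i=K+1}^N R_i²)`,
since `B ≥ 1`. -/
theorem agp_pruned_quantizer_variance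
    {Ω : Type*} [MeasurableSpace Ω] (μ : Measure Ω) [IsProbabilityMeasure μ]
    (N D b K : ℕ) (hN : 0 < N) (hD : 0 < D) (hb : 1 ≤ b) (hK : K ≤ N)
    (B : ℕ) (hB : B = 2 ^ b - 1)
    (grad : Fin N → Fin D → ℝ)
    (R Z : Fin N → ℝ)
    (hR : ∀ i, R i = (⨆ j, grad i j) - ⨅ j, grad i j)
    (hZ : ∀ i, Z i = ⨅ j, grad i j)
    (hRpos : ∀ i, 0 < R i)
    (A : Fin N → Fin D → Set Ω) (hAmeas : ∀ i j, MeasurableSet (A i j))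
    (hpA : ∀ (i : Fin N) (j : Fin D), (i : ℕ) < K → μ (A i j) = ENNReal.ofReal
      ((B : ℝ) * (grad i j - Z i) / R i - ⌊(B : ℝ) * (grad i j - Z i) / R i⌋))
    (Q : Fin N → Fin D → Ω → ℝ)
    (hQretained : ∀ (i : Fin N) (j : Fin D) (ω : Ω), (i : ℕ) < K → Q i j ω =
      (if ω ∈ A i j then (⌈(B : ℝ) * (grad i j - Z i) / R i⌉ : ℝ)
        else (⌊(B : ℝ) * (grad i j - Z i) / R i⌋ : ℝ)) * (R i / B) + Z i)
    (hQpruned : ∀ (i : Fin N) (j : Fin D) (ω : Ω), K ≤ (i : ℕ) → Q i j ω = 0) :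
    (∑ i : Fin N, ∑ j : Fin D, variance (Q i j) μ ≤
        ((D : ℝ) / (4 * (B : ℝ) ^ 2)) *
          ∑ i ∈ Finset.univ.filter (fun i : Fin N => (i : ℕ) < K), R i ^ 2) ∧
      ((D : ℝ) / (4 * (B : ℝ) ^ 2)) *
          ∑ i ∈ Finset.univ.filter (fun i : Fin N => (i : ℕ) < K), R i ^ 2 ≤
        ((D : ℝ) / 4) *
          ((∑ i ∈ Finset.univ.filter (fun i : Fin N => (i : ℕ) < K), R i ^ 2) +
            ∑ i ∈ Finset.univ.filter (fun i : Fin N => K ≤ (i : ℕ)), R i ^ 2) := by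
  have hB1 : 1 ≤ B := by
    have h2 : 2 ≤ 2 ^ b := by
      calc 2 = 2 ^ 1 := by norm_num
      _ ≤ 2 ^ b := Nat.pow_le_pow_right (by norm_num) hb
    omega
  have hBR : (1 : ℝ) ≤ (B : ℝ) := by exact_mod_cast hB1
  have hBpos : (0 : ℝ) < (B : ℝ) := by linarith
  -- per-entry bound for retained rows
  have hvar : ∀ (i : Fin N) (j : Fin D), (i : ℕ) < K →
      variance (Q i j) μ ≤ R i ^ 2 / (4 * (B : ℝ) ^ 2) := by
    intro i j hi
    set X : ℝ := (B : ℝ) * (grad i j - Z i) / R i with hX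
    set lo : ℝ := (⌊X⌋ : ℝ) * (R i / B) + Z i with hlo
    set hi' : ℝ := (⌈X⌉ : ℝ) * (R i / B) + Z i with hhi
    have hRB : 0 < R i / B := div_pos (hRpos i) hBpos
    have hfl : ((⌊X⌋ : ℝ)) ≤ ((⌈X⌉ : ℝ)) := by exact_mod_cast Int.floor_le_ceil X
    have hcf : ((⌈X⌉ : ℝ)) ≤ ((⌊X⌋ : ℝ)) + 1 := by exact_mod_cast Int.ceil_le_floor_add_one X
    have hbdd : ∀ᵐ ω ∂μ, Q i j ω ∈ Set.Icc lo hi' := by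
      refine ae_of_all μ fun ω => ?_
      rw [hQretained i j ω hi]
      by_cases hω : ω ∈ A i j
      · simp only [hω, if_true]
        constructor
        · have := mul_le_mul_of_nonneg_right hfl hRB.le
          simp only [hlo]; linarith
        · simp [hhi, hX]
      · simp only [hω, if_false]
        constructor
        · simp [hlo, hX]
        · have := mul_le_mul_of_nonneg_right hfl hRB.le
          simp only [hhi]; linarith
    have hmeas : AEMeasurable (Q i j) μ := by
      have : Q i j = fun ω => (A i j).piecewise
          (fun _ => ((⌈X⌉ : ℝ) * (R i / B) + Z i))
          (fun _ => ((⌊X⌋ : ℝ) * (R i / B) + Z i)) ω := by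
        funext ω
        rw [hQretained i j ω hi]
        by_cases hω : ω ∈ A i j <;> simp [Set.piecewise, hω, hX]
      rw [this]
      exact (Measurable.piecewise (hAmeas i j) measurable_const measurable_const).aemeasurable
    have hpop := variance_le_sq_of_bounded hbdd hmeas
    calc variance (Q i j) μ ≤ ((hi' - lo) / 2) ^ 2 := hpop
    _ = (((⌈X⌉ : ℝ) - (⌊X⌋ : ℝ)) * (R i / B) / 2) ^ 2 := by
        simp only [hhi, hlo]; ring_nf
    _ ≤ (R i / B / 2) ^ 2 := by
        have h1 : 0 ≤ ((⌈X⌉ : ℝ) - (⌊X⌋ : ℝ)) := by linarith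
        have h2 : ((⌈X⌉ : ℝ) - (⌊X⌋ : ℝ)) ≤ 1 := by linarith
        have h3 : 0 ≤ ((⌈X⌉ : ℝ) - (⌊X⌋ : ℝ)) * (R i / B) / 2 := by positivity
        have h4 : ((⌈X⌉ : ℝ) - (⌊X⌋ : ℝ)) * (R i / B) / 2 ≤ R i / B / 2 := by
          nlinarith
        exact pow_le_pow_left₀ h3 h4 2
    _ = R i ^ 2 / (4 * (B : ℝ) ^ 2) := by
        rw [div_div, div_pow]
        congr 1
        ring
  have hvar0 : ∀ (i : Fin N) (j : Fin D), K ≤ (i : ℕ) → variance (Q i j) μ = 0 := by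
    intro i j hi
    have : Q i j = 0 := funext fun ω => hQpruned i j ω hi
    rw [this, variance_zero]
  have hS1 : (0 : ℝ) ≤ ∑ i ∈ Finset.univ.filter (fun i : Fin N => (i : ℕ) < K), R i ^ 2 :=
    Finset.sum_nonneg fun i _ => sq_nonneg _
  have hS2 : (0 : ℝ) ≤ ∑ i ∈ Finset.univ.filter (fun i : Fin N => K ≤ (i : ℕ)), R i ^ 2 :=
    Finset.sum_nonneg fun i _ => sq_nonneg _
  constructor
  · have hsplit := Finset.sum_filter_add_sum_filter_not (Finset.univ : Finset (Fin N))
      (fun i : Fin N => (i : ℕ) < K) (fun i => ∑ j : Fin D, variance (Q i j) μ)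
    rw [← hsplit]
    have h2zero : ∑ i ∈ Finset.univ.filter (fun i : Fin N => ¬ (i : ℕ) < K),
        (∑ j : Fin D, variance (Q i j) μ) = 0 := by
      apply Finset.sum_eq_zero
      intro i hiF
      simp only [Finset.mem_filter, not_lt] at hiF
      exact Finset.sum_eq_zero fun j _ => hvar0 i j hiF.2
    rw [h2zero, add_zero]
    calc ∑ i ∈ Finset.univ.filter (fun i : Fin N => (i : ℕ) < K),
          (∑ j : Fin D, variance (Q i j) μ)
        ≤ ∑ i ∈ Finset.univ.filter (fun i : Fin N => (i : ℕ) < K),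
          ((D : ℝ) * (R i ^ 2 / (4 * (B : ℝ) ^ 2))) := by
          apply Finset.sum_le_sum
          intro i hiF
          simp only [Finset.mem_filter] at hiF
          calc ∑ j : Fin D, variance (Q i j) μ
              ≤ ∑ _j : Fin D, R i ^ 2 / (4 * (B : ℝ) ^ 2) :=
                Finset.sum_le_sum fun j _ => hvar i j hiF.2
          _ = (D : ℝ) * (R i ^ 2 / (4 * (B : ℝ) ^ 2)) := by
                simp [Finset.sum_const, nsmul_eq_mul]
    _ = ((D : ℝ) / (4 * (B : ℝ) ^ 2)) *
          ∑ i ∈ Finset.univ.filter (fun i : Fin N => (i : ℕ) < K), R i ^ 2 := by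
          rw [Finset.mul_sum]
          apply Finset.sum_congr rfl
          intro i _
          ring
  · have hB2 : (1 : ℝ) ≤ (B : ℝ) ^ 2 := by nlinarith
    have hD0 : (0 : ℝ) ≤ (D : ℝ) := Nat.cast_nonneg D
    have h1 : ((D : ℝ) / (4 * (B : ℝ) ^ 2)) ≤ (D : ℝ) / 4 := by
      apply div_le_div_of_nonneg_left hD0 (by norm_num) (by nlinarith)
    calc ((D : ℝ) / (4 * (B : ℝ) ^ 2)) *
          ∑ i ∈ Finset.univ.filter (fun i : Fin N => (i : ℕ) < K), R i ^ 2
        ≤ ((D : ℝ) / 4) *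
          ∑ i ∈ Finset.univ.filter (fun i : Fin N => (i : ℕ) < K), R i ^ 2 :=
          mul_le_mul_of_nonneg_right h1 hS1
    _ ≤ ((D : ℝ) / 4) *
          ((∑ i ∈ Finset.univ.filter (fun i : Fin N => (i : ℕ) < K), R i ^ 2) +
            ∑ i ∈ Finset.univ.filter (fun i : Fin N => K ≤ (i : ℕ)), R i ^ 2) := by
          apply mul_le_mul_of_nonneg_left (le_add_of_nonneg_right hS2) (by positivity)
end
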